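/- arXiv:2111.07425 — 2 statements merged into one kernel-verified Lean document; each statement's English description precedes it below -/
import Mathlib

section
/- Let G and H be connected graphs and let R ⊆ V(G □ H) satisfy: (i) for each (g,h) ∈ R, either the H-layer through g intersects R only in (g,h), or the G-layer through h intersects R only in (g,h); and (ii) the projections π_G(R) and π_H(R) are general position sets of G and H respectively. Then R is a general position set of G □ H. -/
open SimpleGraph

/-- The interval `I_G[u,v]`: vertices lying on some shortest `u,v`-path. -/
def gpInterval {V : Type*} (G : SimpleGraph V) (u v : V) : Set V :=
  {x | ∃ p : G.Walk u v, p.length = G.dist u v ∧ x ∈ p.support}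

/-- A general position set: no three (distinct) vertices of `S` lie on a common
shortest path. -/
def IsGPSet {V : Type*} (G : SimpleGraph V) (S : Set V) : Prop :=
  ∀ u ∈ S, ∀ v ∈ S, ∀ w ∈ S, u ≠ v → v ≠ w → u ≠ w → v ∉ gpInterval G u w

/-- A maximal general position set. -/
def IsMaximalGPSet {V : Type*} (G : SimpleGraph V) (S : Set V) : Prop :=
  IsGPSet G S ∧ ∀ T : Set V, IsGPSet G T → S ⊆ T → T = S

/-- The general position number of a graph. -/
noncomputable def gpNumber {V : Type*} (G : SimpleGraph V) : ℕ :=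
  sSup {n : ℕ | ∃ S : Finset V, IsGPSet G ↑S ∧ S.card = n}

/-- The lexicographic product of two simple graphs. -/
def lexProd {α β : Type*} (G : SimpleGraph α) (H : SimpleGraph β) :
    SimpleGraph (α × β) where
  Adj x y := G.Adj x.1 y.1 ∨ (x.1 = y.1 ∧ H.Adj x.2 y.2)
  symm := by
    refine ⟨?_⟩
    intro x y h
    rcases h with h | ⟨h1, h2⟩
    · exact Or.inl h.symm
    · exact Or.inr ⟨h1.symm, h2.symm⟩
  loopless := by
    refine ⟨?_⟩
    intro x h
    rcases h with h | ⟨_, h2⟩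
    · exact G.irrefl h
    · exact H.irrefl h2

/-!
A shortest `u,w`-path in `G □ H` has length `d_G(u₁,w₁) + d_H(u₂,w₂)`, while its two
projections have lengths at least these distances and add up to its length. So both
projections are shortest paths, and a vertex `v` between `u` and `w` in `G □ H` projects
to vertices between `u₁, w₁` and between `u₂, w₂`. Since the projections of `R` are in general
position, this forces `v₁ ∈ {u₁, w₁}` and `v₂ ∈ {u₂, w₂}`; the layer condition at `v` rules
out the mixed cases, and the remaining ones give `v = u` or `v = w`.
-/

namespace SimpleGraph

variable {α β V : Type*} {G : SimpleGraph α} {H : SimpleGraph β}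

lemma Reachable.dist_boxProd {x y : α × β} (h : (G □ H).Reachable x y) :
    (G □ H).dist x y = G.dist x.1 y.1 + H.dist x.2 y.2 := by
  obtain ⟨hG, hH⟩ := reachable_boxProd.mp h
  have := h.coe_dist_eq_edist
  rw [edist_boxProd, ← hG.coe_dist_eq_edist, ← hH.coe_dist_eq_edist] at this
  exact_mod_cast this

lemma eq_of_mem_gpInterval_self {K : SimpleGraph V} {u x : V} (hx : x ∈ gpInterval K u u) :
    x = u := by
  obtain ⟨p, hp, hx⟩ := hx
  rw [dist_self, Walk.length_eq_zero_iff, ← Walk.eq_nil_iff_nil] at hp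
  simpa [hp] using hx

lemma IsGPSet.eq_or_eq_of_mem_gpInterval {K : SimpleGraph V} {S : Set V} (hS : IsGPSet K S)
    {u v w : V} (hu : u ∈ S) (hv : v ∈ S) (hw : w ∈ S) (h : v ∈ gpInterval K u w) :
    v = u ∨ v = w := by
  by_cases huw : u = w
  · subst huw
    exact Or.inl (eq_of_mem_gpInterval_self h)
  by_contra! hvuw
  exact hS u hu v hv w hw (Ne.symm hvuw.1) hvuw.2 huw h

lemma gpInterval_boxProd_subset (u w : α × β) :
    gpInterval (G □ H) u w ⊆ gpInterval G u.1 w.1 ×ˢ gpInterval H u.2 w.2 := by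
  classical
  obtain ⟨u₁, u₂⟩ := u
  obtain ⟨w₁, w₂⟩ := w
  rintro ⟨v₁, v₂⟩ ⟨p, hp, hv⟩
  set q := p.takeUntil _ hv
  set r := p.dropUntil _ hv
  have hqr : q.length + r.length = p.length := by
    rw [← Walk.length_append, p.take_spec hv]
  rw [Reachable.dist_boxProd ⟨p⟩] at hp
  have hG := dist_le (q.ofBoxProdLeft.append r.ofBoxProdLeft)
  have hH := dist_le (q.ofBoxProdRight.append r.ofBoxProdRight)
  rw [Walk.length_append] at hG hH
  have hq := q.length_boxProd
  have hr := r.length_boxProd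
  refine ⟨⟨q.ofBoxProdLeft.append r.ofBoxProdLeft, ?_, ?_⟩,
    ⟨q.ofBoxProdRight.append r.ofBoxProdRight, ?_, ?_⟩⟩
  · rw [Walk.length_append]; omega
  · exact Walk.support_subset_support_append_left _ _ q.ofBoxProdLeft.end_mem_support
  · rw [Walk.length_append]; omega
  · exact Walk.support_subset_support_append_left _ _ q.ofBoxProdRight.end_mem_support

end SimpleGraph

theorem stmt8_general {α β : Type*} (G : SimpleGraph α) (H : SimpleGraph β)
    (R : Set (α × β))
    (hlayer : ∀ x ∈ R, (∀ y ∈ R, y.1 = x.1 → y = x) ∨ (∀ y ∈ R, y.2 = x.2 → y = x))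
    (hprojG : IsGPSet G (Prod.fst '' R)) (hprojH : IsGPSet H (Prod.snd '' R)) :
    IsGPSet (G □ H) R := by
  rintro u hu v hv w hw huv hvw huw hvI
  obtain ⟨hvI₁, hvI₂⟩ := gpInterval_boxProd_subset u w hvI
  have h₁ := hprojG.eq_or_eq_of_mem_gpInterval (Set.mem_image_of_mem _ hu)
    (Set.mem_image_of_mem _ hv) (Set.mem_image_of_mem _ hw) hvI₁
  have h₂ := hprojH.eq_or_eq_of_mem_gpInterval (Set.mem_image_of_mem _ hu)
    (Set.mem_image_of_mem _ hv) (Set.mem_image_of_mem _ hw) hvI₂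
  rcases h₁ with h₁ | h₁ <;> rcases h₂ with h₂ | h₂
  · exact huv (Prod.ext h₁ h₂).symm
  · rcases hlayer v hv with hfst | hsnd
    · exact huv (hfst u hu h₁.symm)
    · exact hvw (hsnd w hw h₂.symm).symm
  · rcases hlayer v hv with hfst | hsnd
    · exact hvw (hfst w hw h₁.symm).symm
    · exact huv (hsnd u hu h₂.symm)
  · exact hvw (Prod.ext h₁ h₂)

/-- a sufficient condition for a set to be a general position set
of a Cartesian product. -/
theorem stmt8 {α β : Type*} (G : SimpleGraph α) (H : SimpleGraph β)
    (hG : G.Connected) (hH : H.Connected) (R : Set (α × β))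
    (hlayer : ∀ x ∈ R, (∀ y ∈ R, y.1 = x.1 → y = x) ∨ (∀ y ∈ R, y.2 = x.2 → y = x))
    (hprojG : IsGPSet G (Prod.fst '' R)) (hprojH : IsGPSet H (Prod.snd '' R)) :
    IsGPSet (G □ H) R :=
  stmt8_general G H R hlayer hprojG hprojH
end

section
/- If G and H are connected graphs and S is a general position set of the lexicographic product G ∘ H, then the projection π_G(S) is a general position set of G. -/
open SimpleGraph

/-!
Projecting a walk of `G ∘ H` to `G` and dropping the steps inside a fibre `{g} × V(H)` gives a
walk of `G` that is no longer, while a walk of `G` with distinct ends lifts to a walk of `G ∘ H`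
of the same length between *any* two vertices of the end fibres: its first edge may jump to any
`H`-coordinate. Hence `d((u,b),(w,b')) = d_G(u,w)` for `u ≠ w`, and a shortest `u,w`-path through
`v` lifts to a shortest path through `(v,b)` for every `b`. Three vertices of `π_G(S)` on a
shortest path would thus give three vertices of `S` on a shortest path.
-/

section LexProd

variable {α β : Type*} {G : SimpleGraph α} {H : SimpleGraph β}

def lexProdLayer (H : SimpleGraph β) (b : β) : G →g lexProd G H where
  toFun g := (g, b)
  map_rel' h := Or.inl h

lemma exists_walk_fst_length_le : ∀ {x y : α × β} (q : (lexProd G H).Walk x y),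
    ∃ p : G.Walk x.1 y.1, p.length ≤ q.length
  | _, _, .nil => ⟨.nil, le_rfl⟩
  | _, _, .cons (.inl h) q => by
    obtain ⟨p, hp⟩ := exists_walk_fst_length_le q
    exact ⟨.cons h p, Nat.succ_le_succ hp⟩
  | _, _, .cons (.inr ⟨h, _⟩) q => by
    obtain ⟨p, hp⟩ := exists_walk_fst_length_le q
    exact ⟨p.copy h.symm rfl, (Walk.length_copy ..).trans_le (hp.trans q.length.le_succ)⟩

lemma exists_lexProd_walk_length_eq {u w : α} (p : G.Walk u w) (huw : u ≠ w) (b b' : β) :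
    ∃ q : (lexProd G H).Walk (u, b) (w, b'), q.length = p.length := by
  cases p with
  | nil => exact absurd rfl huw
  | cons h p =>
    exact ⟨.cons (Or.inl h : (lexProd G H).Adj (u, b) (_, b')) (p.map (lexProdLayer H b')),
      congrArg (· + 1) (p.length_map _)⟩

lemma lexProd_dist_of_ne {u w : α} (huw : u ≠ w) (b b' : β) :
    (lexProd G H).dist (u, b) (w, b') = G.dist u w := by
  by_cases hr : G.Reachable u w
  · obtain ⟨p, hp⟩ := hr.exists_walk_length_eq_dist
    obtain ⟨q, hq⟩ := exists_lexProd_walk_length_eq (H := H) p huw b b'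
    obtain ⟨q', hq'⟩ := Reachable.exists_walk_length_eq_dist ⟨q⟩
    obtain ⟨p', hp'⟩ := exists_walk_fst_length_le q'
    refine le_antisymm ((dist_le q).trans_eq (hq.trans hp)) ?_
    calc G.dist u w ≤ p'.length := dist_le p'
      _ ≤ q'.length := hp'
      _ = _ := hq'
  · have hr' : ¬(lexProd G H).Reachable (u, b) (w, b') := fun ⟨q⟩ ↦
      hr ⟨(exists_walk_fst_length_le q).choose⟩
    rw [dist_eq_zero_of_not_reachable hr, dist_eq_zero_of_not_reachable hr']

lemma lexProd_mem_gpInterval {u v w : α} (huv : u ≠ v) (hvw : v ≠ w) (huw : u ≠ w)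
    (hv : v ∈ gpInterval G u w) (b₁ b₂ b₃ : β) :
    (v, b₂) ∈ gpInterval (lexProd G H) (u, b₁) (w, b₃) := by
  classical
  obtain ⟨p, hp, hvp⟩ := hv
  obtain ⟨q₁, hq₁⟩ := exists_lexProd_walk_length_eq (H := H) (p.takeUntil v hvp) huv b₁ b₂
  obtain ⟨q₂, hq₂⟩ := exists_lexProd_walk_length_eq (H := H) (p.dropUntil v hvp) hvw b₂ b₃
  have hlen : (p.takeUntil v hvp).length + (p.dropUntil v hvp).length = p.length := by
    rw [← Walk.length_append, p.take_spec hvp]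
  refine ⟨q₁.append q₂, ?_, (Walk.mem_support_append_iff _ _).2 (Or.inl q₁.end_mem_support)⟩
  rw [Walk.length_append, hq₁, hq₂, hlen, hp, lexProd_dist_of_ne huw]

end LexProd

theorem stmt13_general {α β : Type*} (G : SimpleGraph α) (H : SimpleGraph β)
    (S : Set (α × β))
    (hS : IsGPSet (lexProd G H) S) :
    IsGPSet G (Prod.fst '' S) := by
  rintro u ⟨⟨u, b₁⟩, hu, rfl⟩ v ⟨⟨v, b₂⟩, hv, rfl⟩ w ⟨⟨w, b₃⟩, hw, rfl⟩ huv hvw huw hvI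
  exact hS _ hu _ hv _ hw (mt (congrArg Prod.fst) huv) (mt (congrArg Prod.fst) hvw)
    (mt (congrArg Prod.fst) huw) (lexProd_mem_gpInterval huv hvw huw hvI b₁ b₂ b₃)

/-- the projection to `G` of a general position set of the
lexicographic product `G ∘ H` is a general position set of `G`. -/
theorem stmt13 {α β : Type*} (G : SimpleGraph α) (H : SimpleGraph β)
    (hG : G.Connected) (hH : H.Connected) (S : Set (α × β))
    (hS : IsGPSet (lexProd G H) S) :
    IsGPSet G (Prod.fst '' S) :=
  stmt13_general G H S hS
end
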